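/- arXiv:2506.14749 — 3 statements merged into one kernel-verified Lean document; each statement's English description precedes it below -/
import Mathlib

section
/- Let Σ be a symmetric positive definite d×d real matrix, a ∈ ℝᵈ, b_coef ∈ ℝ, w₀, w₁ ∈ ℝᵈ, and η ≥ 0, ε ≥ 0. Suppose aᵀw₀ + b_coef − √(aᵀ Σ a) − (η + ε)·‖a‖₂ ≥ 0 and aᵀw₁ + b_coef − √(aᵀ Σ a) − (η + ε)·‖a‖₂ ≥ 0. Then for every point c ∈ ℝᵈ lying within Euclidean distance η of the line segment from w₀ to w₁ and every p ∈ ℝᵈ with (p−c)ᵀ Σ⁻¹ (p−c) ≤ 1, it holds that aᵀp + b_coef ≥ ε·‖a‖₂. -/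
open Matrix

/-- The Euclidean (2-)norm on `ℝᵈ`. -/
noncomputable def norm2 {d : ℕ} (x : Fin d → ℝ) : ℝ := Real.sqrt (∑ i, x i ^ 2)

/-- `c` lies within Euclidean distance `η` of the line segment from `a` to `b`. -/
def nearSegment {d : ℕ} (c a b : Fin d → ℝ) (η : ℝ) : Prop :=
  ∃ γ : ℝ, 0 ≤ γ ∧ γ ≤ 1 ∧ norm2 (c - (γ • a + (1 - γ) • b)) ≤ η

/-!
Split `aᵀp = aᵀ(p - c) + aᵀ(c - m) + aᵀm`, where `m` is the point of the segment within `η`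
of `c`. The support function of the ellipsoid `{v | vᵀS⁻¹v ≤ 1}` in direction `a` is
`√(aᵀSa)` (Cauchy–Schwarz for the inner product defined by `S`), so the first term is at least
`-√(aᵀSa)`; the second is at least `-η‖a‖₂` by the Euclidean Cauchy–Schwarz inequality; and the
margin condition holds at `m` because it holds at both endpoints and defines a halfspace.
-/

lemma norm2_eq_norm_toLp {d : ℕ} (x : Fin d → ℝ) : norm2 x = ‖WithLp.toLp 2 x‖ := by
  simp [norm2, EuclideanSpace.norm_eq]

lemma abs_dotProduct_le_norm2_mul_norm2 {d : ℕ} (x y : Fin d → ℝ) :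
    |x ⬝ᵥ y| ≤ norm2 x * norm2 y := by
  rw [norm2_eq_norm_toLp, norm2_eq_norm_toLp, dotProduct_comm]
  exact abs_real_inner_le_norm (WithLp.toLp 2 x) (WithLp.toLp 2 y)

lemma Matrix.PosSemidef.dotProduct_mulVec_sq_le {n : Type*} [Fintype n]
    {M : Matrix n n ℝ} (hM : M.PosSemidef) (x y : n → ℝ) :
    (x ⬝ᵥ (M *ᵥ y)) ^ 2 ≤ (x ⬝ᵥ (M *ᵥ x)) * (y ⬝ᵥ (M *ᵥ y)) := by
  let := M.toSeminormedAddCommGroup hM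
  let := M.toInnerProductSpace hM
  have h := real_inner_mul_inner_self_le x y
  change (M *ᵥ y) ⬝ᵥ star x * ((M *ᵥ y) ⬝ᵥ star x)
    ≤ (M *ᵥ x) ⬝ᵥ star x * ((M *ᵥ y) ⬝ᵥ star y) at h
  simpa only [star_trivial, dotProduct_comm _ x, dotProduct_comm _ y, sq] using h

lemma Matrix.PosDef.dotProduct_sq_le_mul_inv {n : Type*} [Fintype n] [DecidableEq n]
    {S : Matrix n n ℝ} (hS : S.PosDef) (a v : n → ℝ) :
    (a ⬝ᵥ v) ^ 2 ≤ (a ⬝ᵥ (S *ᵥ a)) * (v ⬝ᵥ (S⁻¹ *ᵥ v)) := by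
  set y := S⁻¹ *ᵥ v
  have hSy : S *ᵥ y = v := by
    rw [mulVec_mulVec, mul_nonsing_inv _ (isUnit_iff_ne_zero.mpr hS.det_pos.ne'), one_mulVec]
  have h := hS.posSemidef.dotProduct_mulVec_sq_le a y
  rwa [hSy, dotProduct_comm y] at h

lemma Matrix.PosDef.abs_dotProduct_le_sqrt_of_mem_ellipsoid {n : Type*} [Fintype n]
    [DecidableEq n] {S : Matrix n n ℝ} (hS : S.PosDef) (a : n → ℝ) {v : n → ℝ}
    (hv : v ⬝ᵥ (S⁻¹ *ᵥ v) ≤ 1) :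
    |a ⬝ᵥ v| ≤ Real.sqrt (a ⬝ᵥ (S *ᵥ a)) := by
  have hSa : 0 ≤ a ⬝ᵥ (S *ᵥ a) := by
    simpa using hS.posSemidef.dotProduct_mulVec_nonneg a
  refine Real.abs_le_sqrt ?_
  calc (a ⬝ᵥ v) ^ 2 ≤ (a ⬝ᵥ (S *ᵥ a)) * (v ⬝ᵥ (S⁻¹ *ᵥ v)) := hS.dotProduct_sq_le_mul_inv a v
    _ ≤ a ⬝ᵥ (S *ᵥ a) := mul_le_of_le_one_right hSa hv

lemma le_dotProduct_add_of_mem_segment {n : Type*} [Fintype n] {a w₀ w₁ : n → ℝ} {b r : ℝ}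
    (h₀ : r ≤ a ⬝ᵥ w₀ + b) (h₁ : r ≤ a ⬝ᵥ w₁ + b) {γ : ℝ} (hγ₀ : 0 ≤ γ) (hγ₁ : γ ≤ 1) :
    r ≤ a ⬝ᵥ (γ • w₀ + (1 - γ) • w₁) + b := by
  have hconv := convex_halfSpace_ge (𝕜 := ℝ) (f := (a ⬝ᵥ ·))
    ⟨dotProduct_add a, fun c x => dotProduct_smul c a x⟩ (r - b)
  exact sub_le_iff_le_add.mp <| hconv (sub_le_iff_le_add.mpr h₀) (sub_le_iff_le_add.mpr h₁)
    hγ₀ (sub_nonneg.mpr hγ₁) (add_sub_cancel γ 1)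

theorem halfspace_margin_along_tube_general (d : ℕ)
    (S : Matrix (Fin d) (Fin d) ℝ) (hpd : S.PosDef)
    (a : Fin d → ℝ) (bc : ℝ) (w₀ w₁ : Fin d → ℝ)
    (η ε : ℝ)
    (h₀ : a ⬝ᵥ w₀ + bc - Real.sqrt (a ⬝ᵥ (S *ᵥ a)) - (η + ε) * norm2 a ≥ 0)
    (h₁ : a ⬝ᵥ w₁ + bc - Real.sqrt (a ⬝ᵥ (S *ᵥ a)) - (η + ε) * norm2 a ≥ 0) :
    ∀ c : Fin d → ℝ, nearSegment c w₀ w₁ η →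
      ∀ p : Fin d → ℝ, (p - c) ⬝ᵥ (S⁻¹ *ᵥ (p - c)) ≤ 1 →
        a ⬝ᵥ p + bc ≥ ε * norm2 a := by
  rintro c ⟨γ, hγ₀, hγ₁, hcm⟩ p hp
  set m := γ • w₀ + (1 - γ) • w₁
  have hm : Real.sqrt (a ⬝ᵥ (S *ᵥ a)) + (η + ε) * norm2 a ≤ a ⬝ᵥ m + bc :=
    le_dotProduct_add_of_mem_segment (by linarith) (by linarith) hγ₀ hγ₁
  have hc : -(norm2 a * η) ≤ a ⬝ᵥ (c - m) :=
    neg_le_of_abs_le <| (abs_dotProduct_le_norm2_mul_norm2 a (c - m)).trans <|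
      mul_le_mul_of_nonneg_left hcm (Real.sqrt_nonneg _)
  have hp : -Real.sqrt (a ⬝ᵥ (S *ᵥ a)) ≤ a ⬝ᵥ (p - c) :=
    neg_le_of_abs_le (hpd.abs_dotProduct_le_sqrt_of_mem_ellipsoid a hp)
  have hsplit : a ⬝ᵥ p = a ⬝ᵥ (p - c) + a ⬝ᵥ (c - m) + a ⬝ᵥ m := by
    simp only [dotProduct_sub]
    ring
  linarith

/-- **Lemma 2 of the paper.** If the halfspace-margin condition
`aᵀw + b - √(aᵀ S a) - (η+ε)‖a‖₂ ≥ 0` holds at both endpoints `w₀, w₁` of a segment,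
then every point `p` of the ellipsoid with shape `S` centered at any point `c` of the
`η`-tube of the segment satisfies `aᵀp + b ≥ ε‖a‖₂`. -/
theorem halfspace_margin_along_tube (d : ℕ)
    (S : Matrix (Fin d) (Fin d) ℝ) (hpd : S.PosDef)
    (a : Fin d → ℝ) (bc : ℝ) (w₀ w₁ : Fin d → ℝ)
    (η ε : ℝ) (hη : 0 ≤ η) (hε : 0 ≤ ε)
    (h₀ : a ⬝ᵥ w₀ + bc - Real.sqrt (a ⬝ᵥ (S *ᵥ a)) - (η + ε) * norm2 a ≥ 0)
    (h₁ : a ⬝ᵥ w₁ + bc - Real.sqrt (a ⬝ᵥ (S *ᵥ a)) - (η + ε) * norm2 a ≥ 0) :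
    ∀ c : Fin d → ℝ, nearSegment c w₀ w₁ η →
      ∀ p : Fin d → ℝ, (p - c) ⬝ᵥ (S⁻¹ *ᵥ (p - c)) ≤ 1 →
        a ⬝ᵥ p + bc ≥ ε * norm2 a :=
  halfspace_margin_along_tube_general d S hpd a bc w₀ w₁ η ε h₀ h₁
end

section
/- Let t₀ ≤ t₁ be real numbers, Σ a symmetric positive definite d×d real matrix, and let p, v, c, w : ℝ → ℝᵈ and u : ℝ → ℝᵈ be such that for every t ∈ [t₀, t₁]: p has derivative v(t), c has derivative w(t), and both v and w have derivative u(t) at t. Assume v(t₀) = w(t₀) and (p(t₀) − c(t₀))ᵀ Σ⁻¹ (p(t₀) − c(t₀)) ≤ 1. Then for every t ∈ [t₀, t₁], p(t) − c(t) = p(t₀) − c(t₀) and hence (p(t) − c(t))ᵀ Σ⁻¹ (p(t) − c(t)) ≤ 1. -/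
open Matrix Set

theorem sub_eq_sub_of_hasDerivAt_of_eqOn {E : Type*} [NormedAddCommGroup E] [NormedSpace ℝ E]
    {f g f' g' : ℝ → E} {a b : ℝ}
    (hf : ∀ t ∈ Icc a b, HasDerivAt f (f' t) t) (hg : ∀ t ∈ Icc a b, HasDerivAt g (g' t) t)
    (hfg : EqOn f' g' (Icc a b)) :
    ∀ t ∈ Icc a b, f t - g t = f a - g a := by
  have hderiv : ∀ t ∈ Icc a b, HasDerivAt (f - g) 0 t := fun t ht => by
    simpa [hfg ht] using (hf t ht).sub (hg t ht)
  exact constant_of_has_deriv_right_zero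
    (fun t ht => (hderiv t ht).continuousAt.continuousWithinAt)
    (fun t ht => (hderiv t (Ico_subset_Icc_self ht)).hasDerivWithinAt)

theorem same_input_ellipsoid_invariance_general (d : ℕ) (t₀ t₁ : ℝ)
    (S : Matrix (Fin d) (Fin d) ℝ)
    (p v c w u : ℝ → (Fin d → ℝ))
    (hp : ∀ t ∈ Set.Icc t₀ t₁, HasDerivAt p (v t) t)
    (hc : ∀ t ∈ Set.Icc t₀ t₁, HasDerivAt c (w t) t)
    (hv : ∀ t ∈ Set.Icc t₀ t₁, HasDerivAt v (u t) t)
    (hw : ∀ t ∈ Set.Icc t₀ t₁, HasDerivAt w (u t) t)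
    (hv0 : v t₀ = w t₀)
    (h0 : (p t₀ - c t₀) ⬝ᵥ (S⁻¹ *ᵥ (p t₀ - c t₀)) ≤ 1) :
    ∀ t ∈ Set.Icc t₀ t₁,
      p t - c t = p t₀ - c t₀ ∧
      (p t - c t) ⬝ᵥ (S⁻¹ *ᵥ (p t - c t)) ≤ 1 := by
  have hvw : EqOn v w (Icc t₀ t₁) := fun t ht => by
    simpa [hv0, sub_eq_zero] using sub_eq_sub_of_hasDerivAt_of_eqOn hv hw (fun _ _ => rfl) t ht
  have hconst := sub_eq_sub_of_hasDerivAt_of_eqOn hp hc hvw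
  intro t ht
  rw [hconst t ht]
  exact ⟨rfl, h0⟩

/-- An agent and the swarm centroid following the same
double-integrator dynamics with the same input and equal initial velocities keep a
constant relative position; hence containment in the ellipsoid of shape `S` is
preserved. -/
theorem same_input_ellipsoid_invariance (d : ℕ) (t₀ t₁ : ℝ) (ht : t₀ ≤ t₁)
    (S : Matrix (Fin d) (Fin d) ℝ) (hpd : S.PosDef)
    (p v c w u : ℝ → (Fin d → ℝ))
    (hp : ∀ t ∈ Set.Icc t₀ t₁, HasDerivAt p (v t) t)
    (hc : ∀ t ∈ Set.Icc t₀ t₁, HasDerivAt c (w t) t)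
    (hv : ∀ t ∈ Set.Icc t₀ t₁, HasDerivAt v (u t) t)
    (hw : ∀ t ∈ Set.Icc t₀ t₁, HasDerivAt w (u t) t)
    (hv0 : v t₀ = w t₀)
    (h0 : (p t₀ - c t₀) ⬝ᵥ (S⁻¹ *ᵥ (p t₀ - c t₀)) ≤ 1) :
    ∀ t ∈ Set.Icc t₀ t₁,
      p t - c t = p t₀ - c t₀ ∧
      (p t - c t) ⬝ᵥ (S⁻¹ *ᵥ (p t - c t)) ≤ 1 :=
  same_input_ellipsoid_invariance_general d t₀ t₁ S p v c w u hp hc hv hw hv0 h0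
end

section
/- Let t₀ ≤ t₁ be real numbers, N ≥ 1, Σ a symmetric positive definite d×d real matrix, ζ ≥ 0, and for i = 1,…,N let p_i, v_i : ℝ → ℝᵈ and u : ℝ → ℝᵈ be such that for every t ∈ [t₀, t₁]: p_i has derivative v_i(t) and v_i has derivative u(t) at t (all agents are driven by the same input u). Define the centroid c(t) := (1/N)·∑_{i=1}^N p_i(t). Assume v_i(t₀) = 0 for all i, ‖p_i(t₀) − p_j(t₀)‖₂ ≥ ζ for all i ≠ j, and (p_i(t₀) − c(t₀))ᵀ Σ⁻¹ (p_i(t₀) − c(t₀)) ≤ 1 for all i. Then for all t ∈ [t₀, t₁]: ‖p_i(t) − p_j(t)‖₂ ≥ ζ for all i ≠ j, and (p_i(t) − c(t))ᵀ Σ⁻¹ (p_i(t) − c(t)) ≤ 1 for all i. -/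
open Matrix

/-!
Under a common input the relative positions `p i - p j` have zero acceleration and zero initial
velocity, so they are constant in time. Pairwise distances and deviations from the centroid
depend only on these relative positions, hence keep their initial values.
-/

open Set

section DoubleIntegrator

variable {E : Type*} [NormedAddCommGroup E] [NormedSpace ℝ E] {a b : ℝ}

theorem eqOn_Icc_of_hasDerivAt_eq {f g f' : ℝ → E}
    (hf : ∀ t ∈ Icc a b, HasDerivAt f (f' t) t) (hg : ∀ t ∈ Icc a b, HasDerivAt g (f' t) t)
    (ha : f a = g a) : EqOn f g (Icc a b) :=
  eq_of_has_deriv_right_eq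
    (fun t ht => (hf t (Ico_subset_Icc_self ht)).hasDerivWithinAt)
    (fun t ht => (hg t (Ico_subset_Icc_self ht)).hasDerivWithinAt)
    (fun t ht => (hf t ht).continuousAt.continuousWithinAt)
    (fun t ht => (hg t ht).continuousAt.continuousWithinAt) ha

theorem sub_eq_sub_of_hasDerivAt_of_common_input {p₁ p₂ v₁ v₂ u : ℝ → E}
    (hp₁ : ∀ t ∈ Icc a b, HasDerivAt p₁ (v₁ t) t) (hp₂ : ∀ t ∈ Icc a b, HasDerivAt p₂ (v₂ t) t)
    (hv₁ : ∀ t ∈ Icc a b, HasDerivAt v₁ (u t) t) (hv₂ : ∀ t ∈ Icc a b, HasDerivAt v₂ (u t) t)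
    (hva : v₁ a = v₂ a) {t : ℝ} (ht : t ∈ Icc a b) : p₁ t - p₂ t = p₁ a - p₂ a := by
  have hv : EqOn v₁ v₂ (Icc a b) := eqOn_Icc_of_hasDerivAt_eq hv₁ hv₂ hva
  have hp₂' : ∀ s ∈ Icc a b, HasDerivAt (fun s => p₂ s + (p₁ a - p₂ a)) (v₁ s) s :=
    fun s hs => hv hs ▸ (hp₂ s hs).add_const _
  rw [eqOn_Icc_of_hasDerivAt_eq hp₁ hp₂' (by abel) ht]
  exact add_sub_cancel_left _ _

end DoubleIntegrator

theorem sub_centroid_eq_of_sub_eq_sub {ι E : Type*} [Fintype ι] [AddCommGroup E] [Module ℝ E]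
    {x y : ι → E} (hxy : ∀ i j, x i - x j = y i - y j) (i : ι) :
    x i - (Fintype.card ι : ℝ)⁻¹ • ∑ k, x k = y i - (Fintype.card ι : ℝ)⁻¹ • ∑ k, y k := by
  have hcard : (Fintype.card ι : ℝ) ≠ 0 := Nat.cast_ne_zero.mpr (Fintype.card_pos_iff.mpr ⟨i⟩).ne'
  have hdev : ∀ z : ι → E,
      z i - (Fintype.card ι : ℝ)⁻¹ • ∑ k, z k = (Fintype.card ι : ℝ)⁻¹ • ∑ k, (z i - z k) := by
    intro z
    rw [Finset.sum_sub_distrib, Finset.sum_const, Finset.card_univ, smul_sub,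
      ← Nat.cast_smul_eq_nsmul ℝ, smul_smul, inv_mul_cancel₀ hcard, one_smul]
  simp only [hdev, hxy i]

theorem low_level_control_invariance_general (d N : ℕ)
    (t₀ t₁ : ℝ)
    (S : Matrix (Fin d) (Fin d) ℝ)
    (ζ : ℝ)
    (p v : Fin N → ℝ → (Fin d → ℝ)) (u : ℝ → (Fin d → ℝ))
    (hp : ∀ i, ∀ t ∈ Set.Icc t₀ t₁, HasDerivAt (p i) (v i t) t)
    (hv : ∀ i, ∀ t ∈ Set.Icc t₀ t₁, HasDerivAt (v i) (u t) t)
    (hv0 : ∀ i, v i t₀ = 0)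
    (hdist0 : ∀ i j, i ≠ j → norm2 (p i t₀ - p j t₀) ≥ ζ)
    (hell0 : ∀ i,
      (p i t₀ - (N : ℝ)⁻¹ • ∑ k, p k t₀) ⬝ᵥ
        (S⁻¹ *ᵥ (p i t₀ - (N : ℝ)⁻¹ • ∑ k, p k t₀)) ≤ 1) :
    ∀ t ∈ Set.Icc t₀ t₁,
      (∀ i j, i ≠ j → norm2 (p i t - p j t) ≥ ζ) ∧
      (∀ i,
        (p i t - (N : ℝ)⁻¹ • ∑ k, p k t) ⬝ᵥ
          (S⁻¹ *ᵥ (p i t - (N : ℝ)⁻¹ • ∑ k, p k t)) ≤ 1) := by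
  intro t ht
  have hrel : ∀ i j, p i t - p j t = p i t₀ - p j t₀ := fun i j =>
    sub_eq_sub_of_hasDerivAt_of_common_input (hp i) (hp j) (hv i) (hv j)
      ((hv0 i).trans (hv0 j).symm) ht
  refine ⟨fun i j hij => hrel i j ▸ hdist0 i j hij, fun i => ?_⟩
  have hcentroid := sub_centroid_eq_of_sub_eq_sub hrel i
  rw [Fintype.card_fin] at hcentroid
  exact hcentroid ▸ hell0 i

/-- **Theorem 5 of the paper.** Under the common low-level control
(all agents driven by the same input `u`) with zero initial velocities, intra-swarm
pairwise distances at least `ζ` and containment in the bounding ellipsoid of shape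
`S` centered at the swarm centroid are preserved over the whole time interval. -/
theorem low_level_control_invariance (d N : ℕ) (hN : 1 ≤ N)
    (t₀ t₁ : ℝ) (ht : t₀ ≤ t₁)
    (S : Matrix (Fin d) (Fin d) ℝ) (hpd : S.PosDef)
    (ζ : ℝ) (hζ : 0 ≤ ζ)
    (p v : Fin N → ℝ → (Fin d → ℝ)) (u : ℝ → (Fin d → ℝ))
    (hp : ∀ i, ∀ t ∈ Set.Icc t₀ t₁, HasDerivAt (p i) (v i t) t)
    (hv : ∀ i, ∀ t ∈ Set.Icc t₀ t₁, HasDerivAt (v i) (u t) t)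
    (hv0 : ∀ i, v i t₀ = 0)
    (hdist0 : ∀ i j, i ≠ j → norm2 (p i t₀ - p j t₀) ≥ ζ)
    (hell0 : ∀ i,
      (p i t₀ - (N : ℝ)⁻¹ • ∑ k, p k t₀) ⬝ᵥ
        (S⁻¹ *ᵥ (p i t₀ - (N : ℝ)⁻¹ • ∑ k, p k t₀)) ≤ 1) :
    ∀ t ∈ Set.Icc t₀ t₁,
      (∀ i j, i ≠ j → norm2 (p i t - p j t) ≥ ζ) ∧
      (∀ i,
        (p i t - (N : ℝ)⁻¹ • ∑ k, p k t) ⬝ᵥ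
          (S⁻¹ *ᵥ (p i t - (N : ℝ)⁻¹ • ∑ k, p k t)) ≤ 1) :=
  low_level_control_invariance_general d N t₀ t₁ S ζ p v u hp hv hv0 hdist0 hell0
end
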